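/- arXiv:1706.02641 — 2 statements merged into one kernel-verified Lean document; each statement's English description precedes it below -/
import Mathlib

section
/- The implication from fluid bisimulation equivalence to fluid trace equivalence is strict: for any type Act containing three pairwise distinct actions a, b, c, there exist finite RLFTSs N and N′ over Act such that N ≡fl N′ but N and N′ are not fluid bisimulation equivalent. -/
open scoped BigOperators

/-- A rated labeled fluid transition system (RLFTS) over a type `Act` of actions. -/
structure RLFTS (Act : Type) where
  S : Type
  E : Type
  s0 : S
  src : E → S
  tgt : E → S
  rate : E → ℝ
  label : E → Act
  RP : S → ℝ
  rate_pos : ∀ e, 0 < rate e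
  out_finite : ∀ s : S, {e : E | src e = s}.Finite
  out_nonempty : ∀ s : S, ∃ e : E, src e = s

namespace RLFTS

variable {Act : Type}

/-- Exit rate of a state. -/
noncomputable def RE (N : RLFTS Act) (s : N.S) : ℝ :=
  ∑ᶠ e ∈ {e : N.E | N.src e = s}, N.rate e

/-- Average sojourn time in a state. -/
noncomputable def SJ (N : RLFTS Act) (s : N.S) : ℝ := 1 / N.RE s

/-- Firing probability of an edge. -/
noncomputable def PTe (N : RLFTS Act) (e : N.E) : ℝ := N.rate e / N.RE (N.src e)

/-- `IsPathFrom N M es` : the list of edges `es` is a path starting in the state `M`. -/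
def IsPathFrom (N : RLFTS Act) : N.S → List N.E → Prop
  | _, [] => True
  | M, e :: es => N.src e = M ∧ IsPathFrom N (N.tgt e) es

/-- The list of states visited by a path starting in `M`. -/
def visits (N : RLFTS Act) : N.S → List N.E → List N.S
  | M, [] => [M]
  | M, e :: es => M :: visits N (N.tgt e) es

/-- Execution probability of a path. -/
noncomputable def pathPT (N : RLFTS Act) (es : List N.E) : ℝ := (es.map N.PTe).prod

/-- Cumulative execution probability of the `(σ,ς,ϱ)`-selected paths starting in `M`. -/
noncomputable def PTsel (N : RLFTS Act) (M : N.S) (σ : List Act) (ς ϱ : List ℝ) : ℝ :=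
  ∑ᶠ es ∈ {es : List N.E | IsPathFrom N M es ∧ es.map N.label = σ ∧
      (visits N M es).map N.SJ = ς ∧ (visits N M es).map N.RP = ϱ}, N.pathPT es

end RLFTS

namespace RLFTS

variable {Act : Type}

/-- Source map on the disjoint union of the edges of two RLFTSs. -/
def csrc (N N' : RLFTS Act) : N.E ⊕ N'.E → N.S ⊕ N'.S := Sum.map N.src N'.src

/-- Target map on the disjoint union of the edges of two RLFTSs. -/
def ctgt (N N' : RLFTS Act) : N.E ⊕ N'.E → N.S ⊕ N'.S := Sum.map N.tgt N'.tgt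

/-- Rate function on the disjoint union of the edges of two RLFTSs. -/
def crate (N N' : RLFTS Act) : N.E ⊕ N'.E → ℝ := Sum.elim N.rate N'.rate

/-- Labeling on the disjoint union of the edges of two RLFTSs. -/
def clabel (N N' : RLFTS Act) : N.E ⊕ N'.E → Act := Sum.elim N.label N'.label

/-- Fluid-rate function on the disjoint union of the states of two RLFTSs. -/
def cRP (N N' : RLFTS Act) : N.S ⊕ N'.S → ℝ := Sum.elim N.RP N'.RP

/-- Overall rate to move from the state `s` into the set of states `H` by action `a`,
in the disjoint union of two RLFTSs. -/
noncomputable def RMa (N N' : RLFTS Act) (a : Act) (s : N.S ⊕ N'.S)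
    (H : Set (N.S ⊕ N'.S)) : ℝ :=
  ∑ᶠ e ∈ {e : N.E ⊕ N'.E | csrc N N' e = s ∧ clabel N N' e = a ∧ ctgt N N' e ∈ H},
    crate N N' e

/-- `R` is a fluid bisimulation between the RLFTSs `N` and `N'`. -/
def FluidBisim (N N' : RLFTS Act) (R : (N.S ⊕ N'.S) → (N.S ⊕ N'.S) → Prop) : Prop :=
  Equivalence R ∧ R (Sum.inl N.s0) (Sum.inr N'.s0) ∧
    ∀ s1 s2, R s1 s2 → cRP N N' s1 = cRP N N' s2 ∧
      ∀ (a : Act) (s : N.S ⊕ N'.S), RMa N N' a s1 {v | R s v} = RMa N N' a s2 {v | R s v}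

/-- The RLFTSs `N` and `N'` are fluid bisimulation equivalent. -/
def FluidBisimEquiv (N N' : RLFTS Act) : Prop := ∃ R, FluidBisim N N' R

end RLFTS

namespace RLFTS

/-- The RLFTSs `N` and `N'` are fluid trace equivalent: the cumulative probabilities of the
`(σ,ς,ϱ)`-selected paths from the initial states coincide for every triple `(σ,ς,ϱ)` of lists
over `Act`, `ℝ_{>0}` and `ℝ`. -/
def FluidTraceEquiv {Act : Type} (N N' : RLFTS Act) : Prop :=
  ∀ (σ : List Act) (ς ϱ : List ℝ), (∀ x ∈ ς, 0 < x) →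
    N.PTsel N.s0 σ ς ϱ = N'.PTsel N'.s0 σ ς ϱ

end RLFTS

/-!
`lateChoice a b c` performs `a` at rate 2 and only then chooses between `b` and `c` (rate 1
each), while `earlyChoice a b c` resolves the choice already with two `a`-edges of rate 1, after
which only `b`, resp. only `c`, is possible, at rate 2. Both systems end in an `a`-loop, since
every state needs an outgoing edge. All exit rates are 2 and all fluid rates 0, so sojourn-time
and fluid-rate sequences carry no information, and path probabilities are linear in the
successor states: the `a`-successor of `lateChoice` behaves like the equal mixture of the two
`a`-successors of `earlyChoice`, which gives fluid trace equivalence. A fluid bisimulation,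
however, would have to put both of those successors in the class of the `a`-successor of
`lateChoice`, which can perform `b`, whereas the `c`-successor cannot.
-/

namespace RLFTS

section General

variable {Act : Type} (N : RLFTS Act)

def selectedPaths (M : N.S) (σ : List Act) (ς ϱ : List ℝ) : Set (List N.E) :=
  {es | N.IsPathFrom M es ∧ es.map N.label = σ ∧
    (N.visits M es).map N.SJ = ς ∧ (N.visits M es).map N.RP = ϱ}

lemma PTsel_eq_finsum (M : N.S) (σ : List Act) (ς ϱ : List ℝ) :
    N.PTsel M σ ς ϱ = ∑ᶠ es ∈ N.selectedPaths M σ ς ϱ, N.pathPT es := rfl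

lemma selectedPaths_sojourn_nil (M : N.S) (σ : List Act) (ϱ : List ℝ) :
    N.selectedPaths M σ [] ϱ = ∅ := by
  ext (_ | _) <;> simp [selectedPaths, visits]

lemma selectedPaths_fluid_nil (M : N.S) (σ : List Act) (ς : List ℝ) :
    N.selectedPaths M σ ς [] = ∅ := by
  ext (_ | _) <;> simp [selectedPaths, visits]

lemma selectedPaths_nil (M : N.S) (ς ϱ : List ℝ) :
    N.selectedPaths M [] ς ϱ = if ς = [N.SJ M] ∧ ϱ = [N.RP M] then {[]} else ∅ := by
  ext (_ | _) <;> split_ifs with h <;> simp [selectedPaths, visits, IsPathFrom, h]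
  · rintro rfl rfl
    exact h ⟨rfl, rfl⟩

lemma selectedPaths_cons (M : N.S) (x : Act) (σ : List Act) (t r : ℝ) (ς ϱ : List ℝ) :
    N.selectedPaths M (x :: σ) (t :: ς) (r :: ϱ) =
      ⋃ e ∈ {e | N.src e = M ∧ N.label e = x ∧ N.SJ M = t ∧ N.RP M = r},
        List.cons e '' N.selectedPaths (N.tgt e) σ ς ϱ := by
  ext (_ | ⟨e, es⟩)
  · simp [selectedPaths]
  · simp only [selectedPaths, Set.mem_ofPred_eq, IsPathFrom, List.map_cons, List.cons.injEq, visits,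
      Set.mem_iUnion, Set.mem_image, exists_eq_right_right, exists_and_left, exists_prop]
    tauto

lemma selectedPaths_finite (M : N.S) (σ : List Act) (ς ϱ : List ℝ) :
    (N.selectedPaths M σ ς ϱ).Finite := by
  induction σ generalizing M ς ϱ with
  | nil => rw [selectedPaths_nil]; split_ifs <;> simp
  | cons x σ ih =>
    rcases ς with _ | ⟨t, ς⟩
    · simp [selectedPaths_sojourn_nil]
    rcases ϱ with _ | ⟨r, ϱ⟩
    · simp [selectedPaths_fluid_nil]
    rw [selectedPaths_cons]
    exact ((N.out_finite M).subset fun e he => he.1).biUnion fun e _ => (ih _ _ _).image _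

lemma pathPT_cons (e : N.E) (es : List N.E) : N.pathPT (e :: es) = N.PTe e * N.pathPT es := by
  simp [pathPT]

@[simp]
lemma PTsel_sojourn_nil (M : N.S) (σ : List Act) (ϱ : List ℝ) : N.PTsel M σ [] ϱ = 0 := by
  rw [PTsel_eq_finsum, selectedPaths_sojourn_nil, finsum_mem_empty]

@[simp]
lemma PTsel_fluid_nil (M : N.S) (σ : List Act) (ς : List ℝ) : N.PTsel M σ ς [] = 0 := by
  rw [PTsel_eq_finsum, selectedPaths_fluid_nil, finsum_mem_empty]

lemma PTsel_nil (M : N.S) (ς ϱ : List ℝ) :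
    N.PTsel M [] ς ϱ = if ς = [N.SJ M] ∧ ϱ = [N.RP M] then 1 else 0 := by
  rw [PTsel_eq_finsum, selectedPaths_nil]
  split_ifs <;> simp [pathPT]

lemma PTsel_cons (M : N.S) (x : Act) (σ : List Act) (t r : ℝ) (ς ϱ : List ℝ) :
    N.PTsel M (x :: σ) (t :: ς) (r :: ϱ) =
      ∑ᶠ e ∈ {e | N.src e = M ∧ N.label e = x ∧ N.SJ M = t ∧ N.RP M = r},
        N.PTe e * N.PTsel (N.tgt e) σ ς ϱ := by
  have hout : {e | N.src e = M ∧ N.label e = x ∧ N.SJ M = t ∧ N.RP M = r}.Finite :=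
    (N.out_finite M).subset fun e he => he.1
  have hdisj : Set.PairwiseDisjoint {e | N.src e = M ∧ N.label e = x ∧ N.SJ M = t ∧ N.RP M = r}
      fun e => List.cons e '' N.selectedPaths (N.tgt e) σ ς ϱ := by
    intro e _ e' _ hne
    simp [Function.onFun, Set.disjoint_left, hne.symm]
  rw [PTsel_eq_finsum, selectedPaths_cons, finsum_mem_biUnion hdisj hout
    fun e _ => (N.selectedPaths_finite _ _ _ _).image _]
  refine finsum_mem_congr rfl fun e _ => ?_
  rw [finsum_mem_image List.cons_injective.injOn, PTsel_eq_finsum, mul_finsum_mem]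
  simp only [pathPT_cons]

open Classical in
lemma PTsel_cons_eq_sum [Fintype N.E] (M : N.S) (x : Act) (σ : List Act) (t r : ℝ)
    (ς ϱ : List ℝ) :
    N.PTsel M (x :: σ) (t :: ς) (r :: ϱ) =
      ∑ e, if N.src e = M ∧ N.label e = x ∧ N.SJ M = t ∧ N.RP M = r then
        N.PTe e * N.PTsel (N.tgt e) σ ς ϱ else 0 := by
  rw [PTsel_cons, finsum_mem_def, finsum_eq_sum_of_fintype]
  simp only [Set.indicator_apply, Set.mem_ofPred_eq]

variable (N' : RLFTS Act)

lemma RMa_inl (x : Act) (s : N.S) (H : Set (N.S ⊕ N'.S)) :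
    RMa N N' x (.inl s) H =
      ∑ᶠ e ∈ {e | N.src e = s ∧ N.label e = x ∧ .inl (N.tgt e) ∈ H}, N.rate e := by
  have : {e | csrc N N' e = .inl s ∧ clabel N N' e = x ∧ ctgt N N' e ∈ H} =
      Sum.inl '' {e | N.src e = s ∧ N.label e = x ∧ .inl (N.tgt e) ∈ H} := by
    ext (e | e) <;> simp [csrc, clabel, ctgt]
  rw [RMa, this, finsum_mem_image Sum.inl_injective.injOn]
  rfl

lemma RMa_inr (x : Act) (s : N'.S) (H : Set (N.S ⊕ N'.S)) :
    RMa N N' x (.inr s) H =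
      ∑ᶠ e ∈ {e | N'.src e = s ∧ N'.label e = x ∧ .inr (N'.tgt e) ∈ H}, N'.rate e := by
  have : {e | csrc N N' e = .inr s ∧ clabel N N' e = x ∧ ctgt N N' e ∈ H} =
      Sum.inr '' {e | N'.src e = s ∧ N'.label e = x ∧ .inr (N'.tgt e) ∈ H} := by
    ext (e | e) <;> simp [csrc, clabel, ctgt]
  rw [RMa, this, finsum_mem_image Sum.inr_injective.injOn]
  rfl

end General

inductive LateState | init | choice | loop
  deriving DecidableEq

inductive EarlyState | init | left | right | loop
  deriving DecidableEq

instance : Fintype LateState := ⟨{.init, .choice, .loop}, fun s => by cases s <;> simp⟩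

instance : Fintype EarlyState := ⟨{.init, .left, .right, .loop}, fun s => by cases s <;> simp⟩

section Example

variable {Act : Type} (a b c : Act)

abbrev lateChoice : RLFTS Act where
  S := LateState
  E := Fin 4
  s0 := .init
  src := ![.init, .choice, .choice, .loop]
  tgt := ![.choice, .loop, .loop, .loop]
  rate := ![2, 1, 1, 2]
  label := ![a, b, c, a]
  RP := 0
  rate_pos := by simp [Fin.forall_fin_succ]
  out_finite _ := Set.toFinite _
  out_nonempty := by decide

abbrev earlyChoice : RLFTS Act where
  S := EarlyState
  E := Fin 5
  s0 := .init
  src := ![.init, .init, .left, .right, .loop]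
  tgt := ![.left, .right, .loop, .loop, .loop]
  rate := ![1, 1, 2, 2, 2]
  label := ![a, a, b, c, a]
  RP := 0
  rate_pos := by simp [Fin.forall_fin_succ]
  out_finite _ := Set.toFinite _
  out_nonempty := by decide

@[simp]
lemma lateChoice_RE (s : LateState) : (lateChoice a b c).RE s = 2 := by
  cases s <;> simp [RE, Fin.sum_univ_succ, finsum_eq_sum_of_fintype, one_add_one_eq_two]

@[simp]
lemma earlyChoice_RE (s : EarlyState) : (earlyChoice a b c).RE s = 2 := by
  cases s <;> simp [RE, Fin.sum_univ_succ, finsum_eq_sum_of_fintype, one_add_one_eq_two]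

lemma PTsel_lateChoice_loop (σ : List Act) (ς ϱ : List ℝ) :
    (lateChoice a b c).PTsel .loop σ ς ϱ = (earlyChoice a b c).PTsel .loop σ ς ϱ := by
  classical
  induction σ generalizing ς ϱ with
  | nil => simp [PTsel_nil, SJ]
  | cons x σ ih =>
    rcases ς with _ | ⟨t, ς⟩
    · simp
    rcases ϱ with _ | ⟨r, ϱ⟩
    · simp
    simp [PTsel_cons_eq_sum, Fin.sum_univ_succ, SJ, PTe, ih]

lemma PTsel_lateChoice_choice (σ : List Act) (ς ϱ : List ℝ) :
    (lateChoice a b c).PTsel .choice σ ς ϱ =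
      (earlyChoice a b c).PTsel .left σ ς ϱ / 2 + (earlyChoice a b c).PTsel .right σ ς ϱ / 2 := by
  classical
  rcases σ with _ | ⟨x, σ⟩
  · simp [PTsel_nil, SJ]
  rcases ς with _ | ⟨t, ς⟩
  · simp
  rcases ϱ with _ | ⟨r, ϱ⟩
  · simp
  simp [PTsel_cons_eq_sum, Fin.sum_univ_succ, SJ, PTe, PTsel_lateChoice_loop, div_eq_inv_mul]

lemma PTsel_lateChoice_init (σ : List Act) (ς ϱ : List ℝ) :
    (lateChoice a b c).PTsel .init σ ς ϱ = (earlyChoice a b c).PTsel .init σ ς ϱ := by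
  classical
  rcases σ with _ | ⟨x, σ⟩
  · simp [PTsel_nil, SJ]
  rcases ς with _ | ⟨t, ς⟩
  · simp
  rcases ϱ with _ | ⟨r, ϱ⟩
  · simp
  simp [PTsel_cons_eq_sum, Fin.sum_univ_succ, SJ, PTe, PTsel_lateChoice_choice, div_eq_inv_mul,
    ite_add_zero]

lemma lateChoice_fluidTraceEquiv : FluidTraceEquiv (lateChoice a b c) (earlyChoice a b c) :=
  fun σ ς ϱ _ => PTsel_lateChoice_init a b c σ ς ϱ

variable {a b c}

open Classical in
lemma RMa_lateChoice_init (H : Set (LateState ⊕ EarlyState)) :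
    RMa (lateChoice a b c) (earlyChoice a b c) a (.inl .init) H =
      if .inl .choice ∈ H then 2 else 0 := by
  rw [RMa_inl]
  simp [finsum_eq_if, Fin.sum_univ_succ, finsum_eq_sum_of_fintype]

open Classical in
lemma RMa_earlyChoice_init (H : Set (LateState ⊕ EarlyState)) :
    RMa (lateChoice a b c) (earlyChoice a b c) a (.inr .init) H =
      (if .inr .left ∈ H then 1 else 0) + (if .inr .right ∈ H then 1 else 0) := by
  rw [RMa_inr]
  simp [finsum_eq_if, Fin.sum_univ_succ, finsum_eq_sum_of_fintype]

open Classical in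
lemma RMa_lateChoice_choice (hbc : b ≠ c) (H : Set (LateState ⊕ EarlyState)) :
    RMa (lateChoice a b c) (earlyChoice a b c) b (.inl .choice) H =
      if .inl .loop ∈ H then 1 else 0 := by
  rw [RMa_inl]
  simp [finsum_eq_if, Fin.sum_univ_succ, finsum_eq_sum_of_fintype, hbc.symm]

lemma RMa_earlyChoice_right (hbc : b ≠ c) (H : Set (LateState ⊕ EarlyState)) :
    RMa (lateChoice a b c) (earlyChoice a b c) b (.inr .right) H = 0 := by
  rw [RMa_inr]
  simp [finsum_eq_if, Fin.sum_univ_succ, finsum_eq_sum_of_fintype, hbc.symm]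

lemma lateChoice_not_fluidBisimEquiv (hbc : b ≠ c) :
    ¬ FluidBisimEquiv (lateChoice a b c) (earlyChoice a b c) := by
  rintro ⟨R, hR, hinit, htransfer⟩
  -- The rate 2 of `init --a--> choice` can only be matched if both unit-rate `a`-edges of
  -- `earlyChoice` end in the class of `choice`.
  have hright : R (.inl .choice) (.inr .right) := by
    have h := (htransfer (.inl .init) (.inr .init) hinit).2 a (.inl .choice)
    rw [RMa_lateChoice_init, RMa_earlyChoice_init] at h
    simp only [Set.mem_ofPred_eq, hR.refl, if_true] at h
    by_contra hne
    rw [if_neg hne] at h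
    split_ifs at h <;> norm_num at h
  have h := (htransfer _ _ hright).2 b (.inl .loop)
  rw [RMa_lateChoice_choice hbc, RMa_earlyChoice_right hbc] at h
  simp [hR.refl] at h

end Example

end RLFTS

theorem RLFTS.fluidTraceEquiv_not_fluidBisimEquiv_general {Act : Type} (a b c : Act)
    (hbc : b ≠ c) :
    ∃ N N' : RLFTS Act, Finite N.S ∧ Finite N.E ∧ Finite N'.S ∧ Finite N'.E ∧
      RLFTS.FluidTraceEquiv N N' ∧ ¬ RLFTS.FluidBisimEquiv N N' :=
  ⟨RLFTS.lateChoice a b c, RLFTS.earlyChoice a b c,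
    inferInstance, inferInstance, inferInstance, inferInstance,
    RLFTS.lateChoice_fluidTraceEquiv a b c, RLFTS.lateChoice_not_fluidBisimEquiv hbc⟩

/-- The implication from fluid bisimulation equivalence to fluid trace equivalence is strict:
over any type of actions with three pairwise distinct actions there exist finite RLFTSs that
are fluid trace equivalent but not fluid bisimulation equivalent. -/
theorem RLFTS.fluidTraceEquiv_not_fluidBisimEquiv {Act : Type} (a b c : Act)
    (hab : a ≠ b) (hac : a ≠ c) (hbc : b ≠ c) :
    ∃ N N' : RLFTS Act, Finite N.S ∧ Finite N.E ∧ Finite N'.S ∧ Finite N'.E ∧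
      RLFTS.FluidTraceEquiv N N' ∧ ¬ RLFTS.FluidBisimEquiv N N' :=
  RLFTS.fluidTraceEquiv_not_fluidBisimEquiv_general a b c hbc
end

section
/- For every formula Φ of HML_flt there exists a finite list σ_Φ over Act such that for every state M of the RLFTS and all lists ς over ℝ_{>0} and ϱ over ℝ, PT(M,σ_Φ,ς,ϱ) = ⟦Φ⟧(M,ς,ϱ). -/
open scoped BigOperators

/-- Formulas of the fluid modal logic `HML_flt`: `Φ ::= ⊤ | ⟨a⟩Φ`. -/
inductive HMLflt (Act : Type) : Type
  | top : HMLflt Act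
  | dia : Act → HMLflt Act → HMLflt Act

open Classical in
/-- Interpretation `⟦Φ⟧(M,ς,ϱ)` of a formula of `HML_flt` at a state `M` of an RLFTS with
a sojourn-time list `ς` and a fluid-rate list `ϱ`. -/
noncomputable def interpFlt {Act : Type} (N : RLFTS Act) :
    HMLflt Act → N.S → List ℝ → List ℝ → ℝ
  | .top, M, ς, ϱ => if ς = [N.SJ M] ∧ ϱ = [N.RP M] then 1 else 0
  | .dia a Φ, M, s :: ς, r :: ϱ =>
      if N.SJ M = s ∧ N.RP M = r then
        ∑ᶠ e ∈ {e : N.E | N.src e = M ∧ N.label e = a},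
          N.PTe e * interpFlt N Φ (N.tgt e) ς ϱ
      else 0
  | .dia _ _, _, _, _ => 0

open Classical

namespace RLFTS

variable {Act : Type} (N : RLFTS Act)

/-- The set of `(σ,ς,ϱ)`-selected paths from `M`. -/
def selSet (M : N.S) (σ : List Act) (ς ϱ : List ℝ) : Set (List N.E) :=
  {es : List N.E | IsPathFrom N M es ∧ es.map N.label = σ ∧
      (visits N M es).map N.SJ = ς ∧ (visits N M es).map N.RP = ϱ}

lemma PTsel_eq (M : N.S) (σ : List Act) (ς ϱ : List ℝ) :
    N.PTsel M σ ς ϱ = ∑ᶠ es ∈ N.selSet M σ ς ϱ, N.pathPT es := rfl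

lemma paths_finite : ∀ (σ : List Act) (M : N.S),
    {es : List N.E | N.IsPathFrom M es ∧ es.map N.label = σ}.Finite
  | [], M => Set.Finite.subset (Set.finite_singleton ([] : List N.E)) (by
      rintro es ⟨_, h⟩
      simp only [List.map_eq_nil_iff] at h
      simp [h])
  | a :: σ, M => by
      have h := (N.out_finite M).biUnion (fun e _ =>
        ((paths_finite σ (N.tgt e)).image (fun es => e :: es)))
      refine h.subset ?_
      rintro es ⟨hp, hl⟩
      cases es with
      | nil => simp at hl
      | cons e es =>
        obtain ⟨hsrc, hp'⟩ := hp
        simp only [List.map_cons, List.cons.injEq] at hl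
        exact Set.mem_biUnion hsrc ⟨es, ⟨hp', hl.2⟩, rfl⟩

lemma selSet_finite (M : N.S) (σ : List Act) (ς ϱ : List ℝ) :
    (N.selSet M σ ς ϱ).Finite :=
  (N.paths_finite σ M).subset (fun _ h => ⟨h.1, h.2.1⟩)

lemma visits_exists (M : N.S) (es : List N.E) :
    ∃ t : List N.S, visits N M es = M :: t := by
  cases es with
  | nil => exact ⟨[], rfl⟩
  | cons e es => exact ⟨_, rfl⟩

lemma selSet_nil (M : N.S) (ς ϱ : List ℝ) :
    N.selSet M [] ς ϱ =
      if ς = [N.SJ M] ∧ ϱ = [N.RP M] then {([] : List N.E)} else ∅ := by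
  ext es
  constructor
  · rintro ⟨hp, hl, hs, hr⟩
    simp only [List.map_eq_nil_iff] at hl
    subst hl
    simp only [visits, List.map_cons, List.map_nil] at hs hr
    simp [← hs, ← hr]
  · intro hes
    split at hes
    · rename_i h
      simp only [Set.mem_singleton_iff] at hes
      subst hes
      exact ⟨trivial, rfl, by simp [visits, h.1, h.2]⟩
    · exact absurd hes (Set.notMem_empty es)

lemma selSet_cons_of_neg (M : N.S) (a : Act) (σ : List Act) (s r : ℝ) (ς ϱ : List ℝ)
    (h : ¬ (N.SJ M = s ∧ N.RP M = r)) :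
    N.selSet M (a :: σ) (s :: ς) (r :: ϱ) = ∅ := by
  ext es
  simp only [Set.mem_empty_iff_false, iff_false]
  rintro ⟨hp, hl, hs, hr⟩
  obtain ⟨t, ht⟩ := N.visits_exists M es
  rw [ht] at hs hr
  simp only [List.map_cons, List.cons.injEq] at hs hr
  exact h ⟨hs.1, hr.1⟩

lemma selSet_empty_right (M : N.S) (σ : List Act) :
    ∀ (ς ϱ : List ℝ), (ς = [] ∨ ϱ = []) → N.selSet M σ ς ϱ = ∅ := by
  intro ς ϱ h
  ext es
  simp only [Set.mem_empty_iff_false, iff_false]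
  rintro ⟨hp, hl, hs, hr⟩
  obtain ⟨t, ht⟩ := N.visits_exists M es
  rw [ht] at hs hr
  rcases h with h | h <;> subst h <;> simp at hs hr

lemma selSet_cons (M : N.S) (a : Act) (σ : List Act) (s r : ℝ) (ς ϱ : List ℝ)
    (h : N.SJ M = s ∧ N.RP M = r) :
    N.selSet M (a :: σ) (s :: ς) (r :: ϱ) =
      ⋃ e ∈ {e : N.E | N.src e = M ∧ N.label e = a},
        (fun es => e :: es) '' N.selSet (N.tgt e) σ ς ϱ := by
  ext es
  constructor
  · rintro ⟨hp, hl, hs, hr⟩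
    cases es with
    | nil => simp at hl
    | cons e es =>
      obtain ⟨hsrc, hp'⟩ := hp
      simp only [List.map_cons, List.cons.injEq] at hl
      simp only [visits, List.map_cons, List.cons.injEq] at hs hr
      exact Set.mem_biUnion ⟨hsrc, hl.1⟩ ⟨es, ⟨hp', hl.2, hs.2, hr.2⟩, rfl⟩
  · intro hes
    simp only [Set.mem_iUnion, Set.mem_image, Set.mem_setOf_eq] at hes
    obtain ⟨e, ⟨hsrc, hlab⟩, es', ⟨hp', hl', hs', hr'⟩, rfl⟩ := hes
    refine ⟨⟨hsrc, hp'⟩, by simp [hlab, hl'], ?_, ?_⟩ <;>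
      simp [visits, hsrc ▸ h.1, hsrc ▸ h.2, hs', hr', h.1, h.2]

end RLFTS
private lemma finsum_mem_mul_left {α : Type*} (c : ℝ) {s : Set α} (hs : s.Finite) (f : α → ℝ) :
    ∑ᶠ i ∈ s, c * f i = c * ∑ᶠ i ∈ s, f i := by
  rw [finsum_mem_eq_finite_toFinset_sum _ hs, finsum_mem_eq_finite_toFinset_sum _ hs,
    Finset.mul_sum]


/-- For every formula `Φ` of `HML_flt` there is a finite action sequence `σ_Φ` such that the
cumulative selected-path probability `PT(M,σ_Φ,ς,ϱ)` coincides with the interpretation of `Φ`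
at every state `M` and for all lists `ς` over `ℝ_{>0}` and `ϱ` over `ℝ`. -/
theorem RLFTS.exists_trace_of_formula {Act : Type} (N : RLFTS Act) (Φ : HMLflt Act) :
    ∃ σ : List Act, ∀ (M : N.S) (ς ϱ : List ℝ), (∀ x ∈ ς, 0 < x) →
      N.PTsel M σ ς ϱ = interpFlt N Φ M ς ϱ := by
  induction Φ with
  | top =>
    refine ⟨[], fun M ς ϱ _ => ?_⟩
    rw [PTsel_eq, selSet_nil, interpFlt]
    split
    · rw [finsum_mem_singleton]; simp [pathPT]
    · rw [finsum_mem_empty]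
  | dia a Φ ih =>
    obtain ⟨σ, hσ⟩ := ih
    refine ⟨a :: σ, fun M ς ϱ hς => ?_⟩
    match ς, ϱ with
    | [], ϱ =>
      rw [PTsel_eq, N.selSet_empty_right _ _ _ _ (Or.inl rfl), finsum_mem_empty]
      rfl
    | s :: ς, [] =>
      rw [PTsel_eq, N.selSet_empty_right _ _ _ _ (Or.inr rfl), finsum_mem_empty]
      rfl
    | s :: ς, r :: ϱ =>
      have hinterp : interpFlt N (.dia a Φ) M (s :: ς) (r :: ϱ) =
          if N.SJ M = s ∧ N.RP M = r then
            ∑ᶠ e ∈ {e : N.E | N.src e = M ∧ N.label e = a},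
              N.PTe e * interpFlt N Φ (N.tgt e) ς ϱ
          else 0 := rfl
      rw [hinterp]
      by_cases h : N.SJ M = s ∧ N.RP M = r
      · rw [if_pos h, PTsel_eq, N.selSet_cons M a σ s r ς ϱ h]
        have hEa : ({e : N.E | N.src e = M ∧ N.label e = a}).Finite :=
          (N.out_finite M).subset fun e he => he.1
        rw [finsum_mem_biUnion ?disj hEa
          (fun e _ => ((N.selSet_finite (N.tgt e) σ ς ϱ).image _))]
        case disj =>
          intro e _ e' _ hne
          simp only [Function.onFun]
          rw [Set.disjoint_left]
          rintro x ⟨xs, _, rfl⟩ ⟨ys, _, hy⟩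
          exact hne (List.cons.injEq .. ▸ hy).1.symm
        refine finsum_mem_congr rfl fun e _ => ?_
        rw [finsum_mem_image (fun x _ y _ hxy => (List.cons.injEq .. ▸ hxy).2)]
        have : ∀ es, N.pathPT (e :: es) = N.PTe e * N.pathPT es := by
          intro es; simp [RLFTS.pathPT]
        rw [finsum_mem_congr rfl fun es _ => this es,
          finsum_mem_mul_left _ (N.selSet_finite (N.tgt e) σ ς ϱ),
          ← PTsel_eq, hσ (N.tgt e) ς ϱ (fun x hx => hς x (List.mem_cons_of_mem _ hx))]
      · rw [if_neg h, PTsel_eq, N.selSet_cons_of_neg M a σ s r ς ϱ h, finsum_mem_empty]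
end
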